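/- Assume q > 2. For all b, x ∈ F and every integer k, the vector Σ_{j=0}^{q−2} ζ^{kj} δ_{((u^j−1)/(u−1))b + u^j x} ∈ L²(F) is an eigenvector of π((u,b)) with eigenvalue ζ^{−k}: π((u,b)) (Σ_{j=0}^{q−2} ζ^{kj} δ_{((u^j−1)/(u−1))b + u^j x}) = ζ^{−k} Σ_{j=0}^{q−2} ζ^{kj} δ_{((u^j−1)/(u−1))b + u^j x}. -/

import Mathlib

/-!
Write `p j = ((u^j - 1)/(u - 1)) b + u^j x`. The map `y ↦ u y + b` sends `p j` to `p (j + 1)`, so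
`π((u,b))` shifts the index of every delta function in the sum by one. Since `u^(q-1) = 1` and
`ζ^(q-1) = 1`, the summands are `(q-1)`-periodic in `j`, so the shifted sum is the original one
with each coefficient `ζ^(kj)` replaced by `ζ^(k(j-1)) = ζ^(-k) ζ^(kj)`.
-/

open Finset

theorem Finset.sum_range_succ_eq_sum_range_of_eq {M : Type*} [AddCancelCommMonoid M] (f : ℕ → M)
    {n : ℕ} (h : f n = f 0) : ∑ i ∈ range n, f (i + 1) = ∑ i ∈ range n, f i := by
  have := (sum_range_succ' f n).symm.trans (sum_range_succ f n)
  rwa [h, add_left_inj] at this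

theorem ne_one_of_forall_mem_zpowers {G : Type*} [Group G] [Nontrivial G] {u : G}
    (hu : ∀ g : G, g ∈ Subgroup.zpowers u) : u ≠ 1 := by
  rintro rfl
  obtain ⟨g, hg⟩ := exists_ne (1 : G)
  simpa [hg] using hu g

section AffineOrbit

variable {F : Type*} [Field F] {u : F}

theorem mul_geom_orbit_add (hu : u ≠ 1) (b x : F) (j : ℕ) :
    u * (((u ^ j - 1) / (u - 1)) * b + u ^ j * x) + b
      = ((u ^ (j + 1) - 1) / (u - 1)) * b + u ^ (j + 1) * x := by
  have : u - 1 ≠ 0 := sub_ne_zero.mpr hu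
  field_simp
  ring

theorem sub_div_eq_geom_orbit_iff (hu0 : u ≠ 0) (hu : u ≠ 1) (b x y : F) (j : ℕ) :
    (y - b) / u = ((u ^ j - 1) / (u - 1)) * b + u ^ j * x ↔
      y = ((u ^ (j + 1) - 1) / (u - 1)) * b + u ^ (j + 1) * x := by
  rw [div_eq_iff hu0, sub_eq_iff_eq_add, mul_comm _ u, mul_geom_orbit_add hu]

theorem geom_orbit_of_pow_eq_one {n : ℕ} (hun : u ^ n = 1) (b x : F) :
    ((u ^ n - 1) / (u - 1)) * b + u ^ n * x = ((u ^ 0 - 1) / (u - 1)) * b + u ^ 0 * x := by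
  simp [hun]

end AffineOrbit

/-- For all `b, x ∈ F` and `k ∈ ℤ`, the vector
`S = Σ_{j=0}^{q-2} ζ^{kj} δ_{((u^j-1)/(u-1))b + u^j x}` is an eigenvector of `π((u,b))`
with eigenvalue `ζ^{-k}`, where `(π(a,b)f)(y) = f((y-b)/a)`. -/
theorem statement_10 {F : Type*} [Field F] [Fintype F] [DecidableEq F]
    (hq : 2 < Fintype.card F)
    (u : Fˣ) (hu : ∀ g : Fˣ, g ∈ Subgroup.zpowers u)
    (ζ : ℂ) (hζ : ζ = Complex.exp (2 * Real.pi * Complex.I / ((Fintype.card F : ℂ) - 1)))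
    (b x : F) (k : ℤ) :
    (fun y : F => ∑ j ∈ Finset.range (Fintype.card F - 1), ζ ^ (k * (j : ℤ)) *
        (if (y - b) / (u : F) = (((u : F) ^ j - 1) / ((u : F) - 1)) * b + (u : F) ^ j * x
          then 1 else 0)) =
      ζ ^ (-k) • fun y : F => ∑ j ∈ Finset.range (Fintype.card F - 1), ζ ^ (k * (j : ℤ)) *
        (if y = (((u : F) ^ j - 1) / ((u : F) - 1)) * b + (u : F) ^ j * x
          then 1 else 0) := by
  have : Nontrivial Fˣ := by
    rw [← Fintype.one_lt_card_iff_nontrivial, Fintype.card_units]; omega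
  have hu1 : (u : F) ≠ 1 := by
    simpa [Units.val_eq_one] using ne_one_of_forall_mem_zpowers hu
  have hun : (u : F) ^ (Fintype.card F - 1) = 1 :=
    FiniteField.pow_card_sub_one_eq_one _ u.ne_zero
  have hζn : ζ ^ (Fintype.card F - 1) = 1 := by
    rw [hζ, ← Nat.cast_pred Fintype.card_pos]
    exact (Complex.isPrimitiveRoot_exp _ (by omega)).pow_eq_one
  have hζ0 : ζ ≠ 0 := hζ ▸ Complex.exp_ne_zero _
  funext y
  set H : ℕ → ℂ := fun j => ζ ^ (k * (j : ℤ)) *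
    if y = (((u : F) ^ j - 1) / ((u : F) - 1)) * b + (u : F) ^ j * x then 1 else 0
  have hH : H (Fintype.card F - 1) = H 0 := by
    simp [H, geom_orbit_of_pow_eq_one hun, mul_comm k, zpow_mul, hζn]
  calc ∑ j ∈ range (Fintype.card F - 1), ζ ^ (k * (j : ℤ)) *
        (if (y - b) / (u : F) = (((u : F) ^ j - 1) / ((u : F) - 1)) * b + (u : F) ^ j * x
          then 1 else 0)
      = ∑ j ∈ range (Fintype.card F - 1), ζ ^ (-k) * H (j + 1) := by
        refine sum_congr rfl fun j _ => ?_
        simp only [H, sub_div_eq_geom_orbit_iff u.ne_zero hu1, ← mul_assoc, ← zpow_add₀ hζ0]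
        push_cast
        ring_nf
    _ = ζ ^ (-k) * ∑ j ∈ range (Fintype.card F - 1), H j := by
        rw [← mul_sum, sum_range_succ_eq_sum_range_of_eq H hH]
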